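/- arXiv:2501.08040 — 6 statements merged into one kernel-verified Lean document; each statement's English description precedes it below -/
import Mathlib

section
/- Let d, N ≥ 1, let C_φ ∈ (0,4) and C_{φ'} > 0, and let φ : ℝ → ℝ be differentiable with |φ(y)| ≤ C_φ and |φ'(y)| ≤ C_{φ'} for all y. Let (A_t)_{t≥0} in ℝ^{N×d}, (W_t)_{t≥0} in ℝ^{N×N}, (X_t)_{t≥0} in ℝ^d with ‖X_t‖_max ≤ 1, and (S̄_t)_{t≥0} in ℝ^N be arbitrary sequences. Fix i ∈ {1,…,N}, j ∈ {1,…,d}, and let real sequences (Ŝ_t^{A^{ij},k})_{t≥0}, k = 1,…,N, satisfy the forward-derivative recursion Ŝ_{t+1}^{A^{ij},k} = σ'((1/d)∑_{ℓ=1}^d φ(A_t^{kℓ}) X_t^ℓ + (1/N)∑_{ℓ=1}^N φ(W_t^{kℓ}) S̄_t^ℓ) · ((δ_{ik}/d) φ'(A_t^{ij}) X_t^j + (1/N)∑_{ℓ=1}^N φ(W_t^{kℓ}) Ŝ_t^{A^{ij},ℓ}). If max_k |Ŝ_0^{A^{ij},k}| ≤ C_{φ'}/((4−C_φ) d), then max_k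 |Ŝ_t^{A^{ij},k}| ≤ C_{φ'}/((4−C_φ) d) for every t ≥ 0. In particular this holds when Ŝ_0^{A^{ij},k} = 0 for all k. -/
open Finset

noncomputable def sigmoid (y : ℝ) : ℝ := 1 / (1 + Real.exp (-y))

lemma sigmoid_deriv_abs_le (y : ℝ) : |deriv sigmoid y| ≤ 1 / 4 := by
  have hpos : 0 < 1 + Real.exp (-y) := by positivity
  have h1 : HasDerivAt (fun y : ℝ => 1 + Real.exp (-y)) (-Real.exp (-y)) y := by
    have := (Real.hasDerivAt_exp (-y)).comp y ((hasDerivAt_id y).neg)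
    simpa using (this.const_add 1)
  have h2 : HasDerivAt sigmoid (Real.exp (-y) / (1 + Real.exp (-y)) ^ 2) y := by
    have := h1.inv hpos.ne'
    have heq : sigmoid = fun y : ℝ => (1 + Real.exp (-y))⁻¹ := by
      funext z; simp [sigmoid]
    rw [heq]
    rw [neg_neg] at this
    exact this
  rw [h2.deriv]
  have ha : 0 < Real.exp (-y) := Real.exp_pos _
  rw [abs_of_nonneg (by positivity)]
  rw [div_le_div_iff₀ (by positivity) (by norm_num)]
  nlinarith [sq_nonneg (1 - Real.exp (-y))]

theorem forward_gradient_A_bound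
    (d N : ℕ) (hd : 1 ≤ d) (hN : 1 ≤ N)
    (Cφ Cφ' : ℝ) (hCφ0 : 0 < Cφ) (hCφ4 : Cφ < 4) (hCφ' : 0 < Cφ')
    (φ : ℝ → ℝ) (hφdiff : Differentiable ℝ φ)
    (hφ : ∀ y, |φ y| ≤ Cφ) (hφ' : ∀ y, |deriv φ y| ≤ Cφ')
    (A : ℕ → Fin N → Fin d → ℝ) (W : ℕ → Fin N → Fin N → ℝ)
    (X : ℕ → Fin d → ℝ) (hX : ∀ t, ‖X t‖ ≤ 1)
    (Sb : ℕ → Fin N → ℝ)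
    (i : Fin N) (j : Fin d)
    (Shat : ℕ → Fin N → ℝ)
    (hrec : ∀ t k, Shat (t + 1) k =
      deriv sigmoid ((1 / (d : ℝ)) * ∑ ℓ, φ (A t k ℓ) * X t ℓ
          + (1 / (N : ℝ)) * ∑ ℓ, φ (W t k ℓ) * Sb t ℓ)
        * ((if i = k then (1 : ℝ) else 0) / (d : ℝ) * deriv φ (A t i j) * X t j
            + (1 / (N : ℝ)) * ∑ ℓ, φ (W t k ℓ) * Shat t ℓ))
    (h0 : ∀ k, |Shat 0 k| ≤ Cφ' / ((4 - Cφ) * d)) :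
    ∀ t k, |Shat t k| ≤ Cφ' / ((4 - Cφ) * d) := by
  have hdp : (0 : ℝ) < d := by exact_mod_cast hd
  have hNp : (0 : ℝ) < N := by exact_mod_cast hN
  have hB : (0 : ℝ) < Cφ' / ((4 - Cφ) * d) := by
    apply div_pos hCφ'
    have : (0:ℝ) < 4 - Cφ := by linarith
    positivity
  set B := Cφ' / ((4 - Cφ) * d) with hBdef
  intro t
  induction t with
  | zero => exact h0
  | succ t ih =>
    intro k
    rw [hrec t k, abs_mul]
    have hXj : |X t j| ≤ 1 := le_trans (norm_le_pi_norm (X t) j) (hX t)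
    have hterm1 : |(if i = k then (1 : ℝ) else 0) / (d : ℝ) * deriv φ (A t i j) * X t j|
        ≤ Cφ' / d := by
      rw [abs_mul, abs_mul]
      have h1' : |(if i = k then (1 : ℝ) else 0) / (d : ℝ)| ≤ 1 / d := by
        rw [abs_div, abs_of_pos hdp]
        gcongr
        split <;> simp
      calc |(if i = k then (1 : ℝ) else 0) / (d : ℝ)| * |deriv φ (A t i j)| * |X t j|
          ≤ (1 / d) * Cφ' * 1 := by
            apply mul_le_mul (mul_le_mul h1' (hφ' _) (abs_nonneg _) (by positivity)) hXj
              (abs_nonneg _) (by positivity)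
        _ = Cφ' / d := by ring
    have hterm2 : |(1 / (N : ℝ)) * ∑ ℓ, φ (W t k ℓ) * Shat t ℓ| ≤ Cφ * B := by
      rw [abs_mul, abs_div, abs_of_pos hNp, abs_one]
      have hsum : |∑ ℓ, φ (W t k ℓ) * Shat t ℓ| ≤ N * (Cφ * B) := by
        calc |∑ ℓ, φ (W t k ℓ) * Shat t ℓ| ≤ ∑ ℓ, |φ (W t k ℓ) * Shat t ℓ| :=
              Finset.abs_sum_le_sum_abs _ _
          _ ≤ ∑ _ℓ : Fin N, Cφ * B := by
              apply Finset.sum_le_sum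
              intro ℓ _
              rw [abs_mul]
              exact mul_le_mul (hφ _) (ih ℓ) (abs_nonneg _) hCφ0.le
          _ = N * (Cφ * B) := by simp [mul_comm]
      calc 1 / (N : ℝ) * |∑ ℓ, φ (W t k ℓ) * Shat t ℓ| ≤ 1 / N * (N * (Cφ * B)) := by
            gcongr
        _ = Cφ * B := by field_simp
    have hsig := sigmoid_deriv_abs_le ((1 / (d : ℝ)) * ∑ ℓ, φ (A t k ℓ) * X t ℓ
          + (1 / (N : ℝ)) * ∑ ℓ, φ (W t k ℓ) * Sb t ℓ)
    have habs : |(if i = k then (1 : ℝ) else 0) / (d : ℝ) * deriv φ (A t i j) * X t j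
            + (1 / (N : ℝ)) * ∑ ℓ, φ (W t k ℓ) * Shat t ℓ| ≤ Cφ' / d + Cφ * B :=
      le_trans (abs_add_le _ _) (add_le_add hterm1 hterm2)
    calc _ ≤ (1 / 4) * (Cφ' / d + Cφ * B) := by
          apply mul_le_mul hsig habs (abs_nonneg _) (by norm_num)
      _ = B := by
          rw [hBdef]
          have h4 : (4 : ℝ) - Cφ ≠ 0 := by linarith
          field_simp
          ring
end

section
/- Let d, N ≥ 1, let C_φ ∈ (0,4) and C_{φ'} > 0, and let φ : ℝ → ℝ be differentiable with |φ(y)| ≤ C_φ and |φ'(y)| ≤ C_{φ'} for all y. Let (A_t)_{t≥0} in ℝ^{N×d}, (W_t)_{t≥0} in ℝ^{N×N}, (X_t)_{t≥0} in ℝ^d, and (S̄_t)_{t≥0} in ℝ^N with ‖S̄_t‖_max ≤ 1 be arbitrary sequences. Fix i, j ∈ {1,…,N}, and let real sequences (Ŝ_t^{W^{ij},k})_{t≥0}, k = 1,…,N, satisfy the forward-derivative recursion Ŝ_{t+1}^{W^{ij},k} = σ'((1/d)∑_{ℓ=1}^d φ(A_t^{kℓ}) X_t^ℓ + (1/N)∑_{ℓ=1}^N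 φ(W_t^{kℓ}) S̄_t^ℓ) · ((δ_{ik}/N) φ'(W_t^{ij}) S̄_t^j + (1/N)∑_{ℓ=1}^N φ(W_t^{kℓ}) Ŝ_t^{W^{ij},ℓ}). If max_k |Ŝ_0^{W^{ij},k}| ≤ C_{φ'}/((4−C_φ) N), then max_k |Ŝ_t^{W^{ij},k}| ≤ C_{φ'}/((4−C_φ) N) for every t ≥ 0. In particular this holds when Ŝ_0^{W^{ij},k} = 0 for all k. -/
open Finset

lemma sigmoid_hasDerivAt (y : ℝ) :
    HasDerivAt sigmoid (Real.exp (-y) / (1 + Real.exp (-y))^2) y := by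
  have hpos : 0 < 1 + Real.exp (-y) := by positivity
  have h1 : HasDerivAt (fun x : ℝ => 1 + Real.exp (-x)) (-Real.exp (-y)) y := by
    have := ((Real.hasDerivAt_exp (-y)).comp y (hasDerivAt_neg y)).const_add 1
    simpa using this
  have h2 := h1.inv (ne_of_gt hpos)
  have heq : sigmoid = fun x : ℝ => (1 + Real.exp (-x))⁻¹ := by
    funext x; simp [sigmoid, one_div]
  rw [heq]
  rw [show Real.exp (-y) / (1 + Real.exp (-y))^2 = - -Real.exp (-y) / (1 + Real.exp (-y))^2 by ring]
  exact h2

lemma deriv_sigmoid_abs_le (y : ℝ) : |deriv sigmoid y| ≤ 1/4 := by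
  rw [(sigmoid_hasDerivAt y).deriv]
  have he : 0 < Real.exp (-y) := Real.exp_pos _
  have hpos : 0 < 1 + Real.exp (-y) := by positivity
  rw [abs_of_nonneg (by positivity)]
  rw [div_le_iff₀ (by positivity)]
  nlinarith [sq_nonneg (1 - Real.exp (-y))]

theorem forward_gradient_W_bound
    (d N : ℕ) (hd : 1 ≤ d) (hN : 1 ≤ N)
    (Cφ Cφ' : ℝ) (hCφ0 : 0 < Cφ) (hCφ4 : Cφ < 4) (hCφ' : 0 < Cφ')
    (φ : ℝ → ℝ) (hφdiff : Differentiable ℝ φ)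
    (hφ : ∀ y, |φ y| ≤ Cφ) (hφ' : ∀ y, |deriv φ y| ≤ Cφ')
    (A : ℕ → Fin N → Fin d → ℝ) (W : ℕ → Fin N → Fin N → ℝ)
    (X : ℕ → Fin d → ℝ)
    (Sb : ℕ → Fin N → ℝ) (hSb : ∀ t, ‖Sb t‖ ≤ 1)
    (i j : Fin N)
    (Shat : ℕ → Fin N → ℝ)
    (hrec : ∀ t k, Shat (t + 1) k =
      deriv sigmoid ((1 / (d : ℝ)) * ∑ ℓ, φ (A t k ℓ) * X t ℓ
          + (1 / (N : ℝ)) * ∑ ℓ, φ (W t k ℓ) * Sb t ℓ)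
        * ((if i = k then (1 : ℝ) else 0) / (N : ℝ) * deriv φ (W t i j) * Sb t j
            + (1 / (N : ℝ)) * ∑ ℓ, φ (W t k ℓ) * Shat t ℓ))
    (h0 : ∀ k, |Shat 0 k| ≤ Cφ' / ((4 - Cφ) * N)) :
    ∀ t k, |Shat t k| ≤ Cφ' / ((4 - Cφ) * N) := by
  have hNpos : (0:ℝ) < N := by exact_mod_cast hN
  set B : ℝ := Cφ' / ((4 - Cφ) * N) with hB
  have hBpos : 0 < B := by
    apply div_pos hCφ' (by nlinarith)
  intro t
  induction t with
  | zero => exact h0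
  | succ t ih =>
    intro k
    rw [hrec t k]
    rw [abs_mul]
    have hSbj : |Sb t j| ≤ 1 := by
      have := norm_le_pi_norm (Sb t) j
      simpa [Real.norm_eq_abs] using this.trans (hSb t)
    -- bound the first factor
    have hσ := deriv_sigmoid_abs_le ((1 / (d : ℝ)) * ∑ ℓ, φ (A t k ℓ) * X t ℓ
          + (1 / (N : ℝ)) * ∑ ℓ, φ (W t k ℓ) * Sb t ℓ)
    -- bound the second factor
    have h1 : |(if i = k then (1 : ℝ) else 0) / (N : ℝ) * deriv φ (W t i j) * Sb t j|
        ≤ Cφ' / N := by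
      rw [abs_mul, abs_mul]
      have hδ : |(if i = k then (1 : ℝ) else 0) / (N : ℝ)| ≤ 1 / N := by
        split <;> simp [abs_of_nonneg, le_of_lt hNpos, one_div,
          inv_nonneg.mpr (le_of_lt hNpos)]
      calc |(if i = k then (1 : ℝ) else 0) / (N : ℝ)| * |deriv φ (W t i j)| * |Sb t j|
          ≤ (1 / N) * Cφ' * 1 := by
            apply mul_le_mul (mul_le_mul hδ (hφ' _) (abs_nonneg _) (by positivity))
              hSbj (abs_nonneg _) (by positivity)
        _ = Cφ' / N := by ring
    have h2 : |(1 / (N : ℝ)) * ∑ ℓ, φ (W t k ℓ) * Shat t ℓ| ≤ Cφ * B := by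
      rw [abs_mul]
      have hsum : |∑ ℓ, φ (W t k ℓ) * Shat t ℓ| ≤ N * (Cφ * B) := by
        calc |∑ ℓ, φ (W t k ℓ) * Shat t ℓ| ≤ ∑ ℓ, |φ (W t k ℓ) * Shat t ℓ| :=
              Finset.abs_sum_le_sum_abs _ _
          _ ≤ ∑ _ℓ : Fin N, Cφ * B := by
              apply Finset.sum_le_sum
              intro ℓ _
              rw [abs_mul]
              exact mul_le_mul (hφ _) (ih ℓ) (abs_nonneg _) (le_of_lt hCφ0)
          _ = N * (Cφ * B) := by simp [mul_comm]
      calc |(1 / (N : ℝ))| * |∑ ℓ, φ (W t k ℓ) * Shat t ℓ|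
          = (1 / N) * |∑ ℓ, φ (W t k ℓ) * Shat t ℓ| := by
            rw [abs_of_nonneg (by positivity)]
        _ ≤ (1 / N) * (N * (Cφ * B)) :=
            mul_le_mul_of_nonneg_left hsum (by positivity)
        _ = Cφ * B := by field_simp
      
    have habs : |(if i = k then (1 : ℝ) else 0) / (N : ℝ) * deriv φ (W t i j) * Sb t j
            + (1 / (N : ℝ)) * ∑ ℓ, φ (W t k ℓ) * Shat t ℓ| ≤ Cφ' / N + Cφ * B :=
      (abs_add_le _ _).trans (add_le_add h1 h2)
    calc |deriv sigmoid _| * |_| ≤ (1/4) * (Cφ' / N + Cφ * B) :=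
          mul_le_mul hσ habs (abs_nonneg _) (by norm_num)
      _ = B := by
          have h4 : (0:ℝ) < 4 - Cφ := by linarith
          rw [hB]
          field_simp
          ring
end

section
/- Let N₁, N₂ ≥ 1 be integers and L, L_℘ ≥ 0. Let F : ℝ^{N₁} × ℝ^{N₂} → ℝ^{N₂} satisfy ‖F(u,v) − F(u',v')‖_max ≤ L·max(‖u−u'‖_max, ‖v−v'‖_max) for all u,u' ∈ ℝ^{N₁}, v,v' ∈ ℝ^{N₂}. Let μ and μ' be Borel probability measures on ℝ^{N₁} and μ_η a Borel probability measure on ℝ. Fix u,u' ∈ ℝ^{N₁}, v,v' ∈ ℝ^{N₂}, η,η' ∈ ℝ, and suppose γ is a coupling of μ and μ' (a probability measure on ℝ^{N₁}×ℝ^{N₁} whose first marginal is μ and second marginal is μ') such that ∫ ‖x−x'‖_max² dγ(x,x') ≤ L_℘² ‖u−u'‖_max². Then there exists a coupling γ̃ of the product measures μ ⊗ δ_{F(u,v)} ⊗ μ_η and μ' ⊗ δ_{F(u',v')} ⊗ μ_η on ℝ^{N₁}×ℝ^{N₂}×ℝ such that ∫ ‖(x,w,e) − (x',w',e')‖_max²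 dγ̃ ≤ (L² + L_℘²)·max(‖u−u'‖_max, ‖v−v'‖_max, |η−η'|)². -/
open MeasureTheory

private lemma aux_max_sq_le (x y : ℝ) (hx : 0 ≤ x) (hy : 0 ≤ y) :
    (max x y) ^ 2 ≤ x ^ 2 + y ^ 2 := by
  rcases le_total x y with h | h
  · rw [max_eq_right h]; nlinarith
  · rw [max_eq_left h]; nlinarith

private lemma aux_sq_le_max_sq (x y : ℝ) (hx : 0 ≤ x) :
    x ^ 2 ≤ (max x y) ^ 2 := by
  have := le_max_left x y
  nlinarith

theorem coupling_contraction
    (N₁ N₂ : ℕ) (hN₁ : 1 ≤ N₁) (hN₂ : 1 ≤ N₂)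
    (L Lp : ℝ) (hL : 0 ≤ L) (hLp : 0 ≤ Lp)
    (F : (Fin N₁ → ℝ) → (Fin N₂ → ℝ) → (Fin N₂ → ℝ))
    (hF : ∀ u u' v v', ‖F u v - F u' v'‖ ≤ L * max ‖u - u'‖ ‖v - v'‖)
    (μ μ' : Measure (Fin N₁ → ℝ)) [IsProbabilityMeasure μ] [IsProbabilityMeasure μ']
    (μη : Measure ℝ) [IsProbabilityMeasure μη]
    (u u' : Fin N₁ → ℝ) (v v' : Fin N₂ → ℝ) (η η' : ℝ)
    (γ : Measure ((Fin N₁ → ℝ) × (Fin N₁ → ℝ)))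
    (hγ1 : γ.map Prod.fst = μ) (hγ2 : γ.map Prod.snd = μ')
    (hγcost : ∫ p, ‖p.1 - p.2‖ ^ 2 ∂γ ≤ Lp ^ 2 * ‖u - u'‖ ^ 2) :
    ∃ γt : Measure (((Fin N₁ → ℝ) × (Fin N₂ → ℝ) × ℝ) × ((Fin N₁ → ℝ) × (Fin N₂ → ℝ) × ℝ)),
      γt.map Prod.fst = μ.prod ((Measure.dirac (F u v)).prod μη) ∧
      γt.map Prod.snd = μ'.prod ((Measure.dirac (F u' v')).prod μη) ∧
      ∫ p, ‖p.1 - p.2‖ ^ 2 ∂γt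
        ≤ (L ^ 2 + Lp ^ 2) * (max (max ‖u - u'‖ ‖v - v'‖) |η - η'|) ^ 2 := by
  have hγuniv : γ Set.univ = 1 := by
    have h : γ.map Prod.fst Set.univ = 1 := by rw [hγ1]; exact measure_univ
    rwa [Measure.map_apply measurable_fst MeasurableSet.univ, Set.preimage_univ] at h
  haveI : IsProbabilityMeasure γ := ⟨hγuniv⟩
  set a := F u v with ha
  set b := F u' v' with hb
  set M := max (max ‖u - u'‖ ‖v - v'‖) |η - η'| with hM
  have hM0 : 0 ≤ M := le_trans (norm_nonneg _) ((le_max_left _ _).trans (le_max_left _ _))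
  set T : ((Fin N₁ → ℝ) × (Fin N₁ → ℝ)) × ℝ →
      (((Fin N₁ → ℝ) × (Fin N₂ → ℝ) × ℝ) × ((Fin N₁ → ℝ) × (Fin N₂ → ℝ) × ℝ)) :=
    fun q => ((q.1.1, a, q.2), (q.1.2, b, q.2)) with hTdef
  have hT : Measurable T := by
    refine Measurable.prod ?_ ?_ <;> refine Measurable.prod ?_ ?_ <;>
      simp only [hTdef] <;> fun_prop
  refine ⟨(γ.prod μη).map T, ?_, ?_, ?_⟩
  · rw [Measure.map_map measurable_fst hT]
    have h1 : (Prod.fst ∘ T) = Prod.map Prod.fst (Prod.mk a) := rfl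
    rw [h1, ← Measure.map_prod_map _ _ measurable_fst (measurable_prodMk_left),
      hγ1, ← Measure.dirac_prod]
  · rw [Measure.map_map measurable_snd hT]
    have h1 : (Prod.snd ∘ T) = Prod.map Prod.snd (Prod.mk b) := rfl
    rw [h1, ← Measure.map_prod_map _ _ measurable_snd (measurable_prodMk_left),
      hγ2, ← Measure.dirac_prod]
  · have hmeas : Measurable (fun p : (((Fin N₁ → ℝ) × (Fin N₂ → ℝ) × ℝ) ×
        ((Fin N₁ → ℝ) × (Fin N₂ → ℝ) × ℝ)) => ‖p.1 - p.2‖ ^ 2) :=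
      ((measurable_fst.sub measurable_snd).norm).pow_const 2
    rw [integral_map hT.aemeasurable hmeas.aestronglyMeasurable]
    have hnorm : ∀ q : ((Fin N₁ → ℝ) × (Fin N₁ → ℝ)) × ℝ,
        ‖(T q).1 - (T q).2‖ = max ‖q.1.1 - q.1.2‖ ‖a - b‖ := by
      intro q
      have h0 : (T q).1 - (T q).2 = (q.1.1 - q.1.2, (a - b, (0 : ℝ))) := by
        simp [hTdef, Prod.ext_iff]
      rw [h0, Prod.norm_def, Prod.norm_def]
      simp
    simp_rw [hnorm]
    have hfmeas : Measurable (fun p : (Fin N₁ → ℝ) × (Fin N₁ → ℝ) =>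
        (max ‖p.1 - p.2‖ ‖a - b‖) ^ 2) :=
      (((measurable_fst.sub measurable_snd).norm).max measurable_const).pow_const 2
    have hred : ∫ q, (max ‖q.1.1 - q.1.2‖ ‖a - b‖) ^ 2 ∂(γ.prod μη)
        = ∫ p, (max ‖p.1 - p.2‖ ‖a - b‖) ^ 2 ∂γ := by
      have h := integral_map (μ := γ.prod μη) measurable_fst.aemeasurable
        hfmeas.aestronglyMeasurable
      rw [Measure.map_fst_prod, measure_univ, one_smul] at h
      exact h.symm
    rw [hred]
    have hab : ‖a - b‖ ≤ L * M :=
      (hF u u' v v').trans (mul_le_mul_of_nonneg_left (le_max_left _ _) hL)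
    have huu : ‖u - u'‖ ≤ M := (le_max_left _ _).trans (le_max_left _ _)
    have hptw : ∀ p : (Fin N₁ → ℝ) × (Fin N₁ → ℝ),
        (max ‖p.1 - p.2‖ ‖a - b‖) ^ 2 ≤ ‖p.1 - p.2‖ ^ 2 + ‖a - b‖ ^ 2 :=
      fun p => aux_max_sq_le _ _ (norm_nonneg _) (norm_nonneg _)
    have key : ∫ p, (max ‖p.1 - p.2‖ ‖a - b‖) ^ 2 ∂γ
        ≤ ∫ p, ‖p.1 - p.2‖ ^ 2 ∂γ + ‖a - b‖ ^ 2 := by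
      by_cases hint : Integrable (fun p : (Fin N₁ → ℝ) × (Fin N₁ → ℝ) => ‖p.1 - p.2‖ ^ 2) γ
      · have hgint : Integrable (fun p : (Fin N₁ → ℝ) × (Fin N₁ → ℝ) =>
            (max ‖p.1 - p.2‖ ‖a - b‖) ^ 2) γ := by
          refine (hint.add (integrable_const (‖a - b‖ ^ 2))).mono
            hfmeas.aestronglyMeasurable ?_
          filter_upwards with p
          simp only [Pi.add_apply, Real.norm_eq_abs]
          rw [abs_of_nonneg (sq_nonneg _),
            abs_of_nonneg (by positivity : (0:ℝ) ≤ ‖p.1 - p.2‖ ^ 2 + ‖a - b‖ ^ 2)]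
          exact hptw p
        calc ∫ p, (max ‖p.1 - p.2‖ ‖a - b‖) ^ 2 ∂γ
            ≤ ∫ p, (‖p.1 - p.2‖ ^ 2 + ‖a - b‖ ^ 2) ∂γ :=
              integral_mono hgint (hint.add (integrable_const _)) hptw
          _ = ∫ p, ‖p.1 - p.2‖ ^ 2 ∂γ + ‖a - b‖ ^ 2 := by
              rw [integral_add hint (integrable_const _), integral_const, probReal_univ]
              simp
      · have hgnint : ¬ Integrable (fun p : (Fin N₁ → ℝ) × (Fin N₁ → ℝ) =>
            (max ‖p.1 - p.2‖ ‖a - b‖) ^ 2) γ := by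
          intro hg
          refine hint (hg.mono
            ((measurable_fst.sub measurable_snd).norm.pow_const 2).aestronglyMeasurable ?_)
          filter_upwards with p
          simp only [Real.norm_eq_abs]
          rw [abs_of_nonneg (sq_nonneg _), abs_of_nonneg (sq_nonneg _)]
          exact aux_sq_le_max_sq _ _ (norm_nonneg _)
        rw [integral_undef hgnint, integral_undef hint]
        positivity
    refine key.trans ?_
    have h1 : ∫ p, ‖p.1 - p.2‖ ^ 2 ∂γ ≤ Lp ^ 2 * M ^ 2 := by
      refine hγcost.trans ?_
      have : ‖u - u'‖ ^ 2 ≤ M ^ 2 := by nlinarith [norm_nonneg (u - u')]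
      exact mul_le_mul_of_nonneg_left this (by positivity)
    have h2 : ‖a - b‖ ^ 2 ≤ L ^ 2 * M ^ 2 := by
      nlinarith [norm_nonneg (a - b), mul_nonneg hL hM0]
    calc ∫ p, ‖p.1 - p.2‖ ^ 2 ∂γ + ‖a - b‖ ^ 2 ≤ Lp ^ 2 * M ^ 2 + L ^ 2 * M ^ 2 :=
          add_le_add h1 h2
      _ = (L ^ 2 + Lp ^ 2) * M ^ 2 := by ring
end

section
/- Let d, N ≥ 1, C_φ ∈ (0,4), C_{φ'} > 0, L_f > 0, C_λ > 0, C_{λ'} > 0. Let f : ℝ^{d}×ℝ^{d_Z}×ℝ → ℝ be bounded by L_f and L_f-Lipschitz with respect to the max norm, and let λ : ℝ → ℝ be differentiable with |λ| ≤ C_λ and |λ'| ≤ C_{λ'}. For parameters θ = (A, W, B, c) ∈ ℝ^{N×d}×ℝ^{N×N}×ℝ^N×ℝ and for h = (x, z, s, s̃^A, s̃^W, η) define the gradient-estimate vector g(h;θ) ∈ ℝ^{Nd + N² + N + 1} whose blocks are: −(f(x,z,η) − ∑_k λ(B^k) s^k − λ(c)) times, respectively, ∑_k λ(B^k) s̃^{A,k}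 (entries indexed by (i,j) ∈ {1,…,N}×{1,…,d}), ∑_k λ(B^k) s̃^{W,k} (entries indexed by (i,j) ∈ {1,…,N}²), the vector with entries λ'(B^k) s^k, and the scalar λ'(c). Then there exists a constant C < ∞, depending only on N, d, L_f, C_λ, C_{λ'}, C_φ, C_{φ'}, such that for every θ and for all h, h' lying in the rectangle ℛ — that is, ‖x‖_max, ‖z‖_max ≤ 1, s ∈ [0,1]^N, every entry of s̃^A bounded in absolute value by C_{φ'}/((4−C_φ)d), every entry of s̃^W bounded by C_{φ'}/((4−C_φ)N), and |η| ≤ 1 — one has ‖g(h;θ) − g(h';θ)‖_max ≤ C ‖h − h'‖_max. -/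
open Finset

set_option maxHeartbeats 2000000 in
theorem gradient_estimate_lipschitz
    (d dZ N : ℕ) (hd : 1 ≤ d) (hN : 1 ≤ N)
    (Cφ Cφ' Lf Clam Clam' : ℝ)
    (hCφ0 : 0 < Cφ) (hCφ4 : Cφ < 4) (hCφ' : 0 < Cφ')
    (hLf : 0 < Lf) (hClam : 0 < Clam) (hClam' : 0 < Clam')
    (f : (Fin d → ℝ) → (Fin dZ → ℝ) → ℝ → ℝ)
    (hfbdd : ∀ x z η, |f x z η| ≤ Lf)
    (hflip : ∀ x z η x' z' η',
      |f x z η - f x' z' η'| ≤ Lf * max (max ‖x - x'‖ ‖z - z'‖) |η - η'|)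
    (lam : ℝ → ℝ) (hlamdiff : Differentiable ℝ lam)
    (hlam : ∀ y, |lam y| ≤ Clam) (hlam' : ∀ y, |deriv lam y| ≤ Clam') :
    ∃ C : ℝ,
      ∀ (A : Fin N → Fin d → ℝ) (W : Fin N → Fin N → ℝ) (B : Fin N → ℝ) (c : ℝ)
        (x x' : Fin d → ℝ) (z z' : Fin dZ → ℝ) (s s' : Fin N → ℝ)
        (tA tA' : Fin N → Fin d → Fin N → ℝ) (tW tW' : Fin N → Fin N → Fin N → ℝ)
        (η η' : ℝ),
        ‖x‖ ≤ 1 → ‖x'‖ ≤ 1 → ‖z‖ ≤ 1 → ‖z'‖ ≤ 1 →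
        (∀ k, s k ∈ Set.Icc (0 : ℝ) 1) → (∀ k, s' k ∈ Set.Icc (0 : ℝ) 1) →
        (∀ a b ℓ, |tA a b ℓ| ≤ Cφ' / ((4 - Cφ) * d)) →
        (∀ a b ℓ, |tA' a b ℓ| ≤ Cφ' / ((4 - Cφ) * d)) →
        (∀ a b ℓ, |tW a b ℓ| ≤ Cφ' / ((4 - Cφ) * N)) →
        (∀ a b ℓ, |tW' a b ℓ| ≤ Cφ' / ((4 - Cφ) * N)) →
        |η| ≤ 1 → |η'| ≤ 1 →
        max
          (max
            ‖(fun i j => -(f x z η - ∑ k, lam (B k) * s k - lam c)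
                  * ∑ k, lam (B k) * tA i j k)
              - (fun i j => -(f x' z' η' - ∑ k, lam (B k) * s' k - lam c)
                  * ∑ k, lam (B k) * tA' i j k)‖
            ‖(fun i j => -(f x z η - ∑ k, lam (B k) * s k - lam c)
                  * ∑ k, lam (B k) * tW i j k)
              - (fun i j => -(f x' z' η' - ∑ k, lam (B k) * s' k - lam c)
                  * ∑ k, lam (B k) * tW' i j k)‖)
          (max
            ‖(fun k => -(f x z η - ∑ k', lam (B k') * s k' - lam c)
                  * (deriv lam (B k) * s k))
              - (fun k => -(f x' z' η' - ∑ k', lam (B k') * s' k' - lam c)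
                  * (deriv lam (B k) * s' k))‖
            |(-(f x z η - ∑ k, lam (B k) * s k - lam c) * deriv lam c)
              - (-(f x' z' η' - ∑ k, lam (B k) * s' k - lam c) * deriv lam c)|)
        ≤ C * max
            (max (max ‖x - x'‖ ‖z - z'‖) (max ‖s - s'‖ ‖tA - tA'‖))
            (max ‖tW - tW'‖ |η - η'|) := by
  classical
  set Ka : ℝ := Cφ' / ((4 - Cφ) * d) with hKa_def
  set Kw : ℝ := Cφ' / ((4 - Cφ) * N) with hKw_def
  have hd0 : (0:ℝ) < d := by exact_mod_cast Nat.lt_of_lt_of_le Nat.zero_lt_one hd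
  have hN0 : (0:ℝ) < N := by exact_mod_cast Nat.lt_of_lt_of_le Nat.zero_lt_one hN
  have h4C : (0:ℝ) < 4 - Cφ := by linarith
  have hKa0 : 0 ≤ Ka := div_nonneg hCφ'.le (mul_nonneg h4C.le hd0.le)
  have hKw0 : 0 ≤ Kw := div_nonneg hCφ'.le (mul_nonneg h4C.le hN0.le)
  set E : ℝ := Lf + N * Clam + Clam with hE_def
  set Le : ℝ := Lf + N * Clam with hLe_def
  have hE0 : 0 ≤ E := by positivity
  have hLe0 : 0 ≤ Le := by positivity
  refine ⟨N * Clam * (E + Le * Ka) + N * Clam * (E + Le * Kw) + Clam' * (E + Le), ?_⟩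
  intro A W B c x x' z z' s s' tA tA' tW tW' η η'
  intro hx hx' hz hz' hs hs' htA htA' htW htW' hη hη'
  set D : ℝ := max (max (max ‖x - x'‖ ‖z - z'‖) (max ‖s - s'‖ ‖tA - tA'‖))
      (max ‖tW - tW'‖ |η - η'|) with hD_def
  have hxxD : ‖x - x'‖ ≤ D := le_max_of_le_left (le_max_of_le_left (le_max_left _ _))
  have hzzD : ‖z - z'‖ ≤ D := le_max_of_le_left (le_max_of_le_left (le_max_right _ _))
  have hssD : ‖s - s'‖ ≤ D := le_max_of_le_left (le_max_of_le_right (le_max_left _ _))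
  have htAD : ‖tA - tA'‖ ≤ D := le_max_of_le_left (le_max_of_le_right (le_max_right _ _))
  have htWD : ‖tW - tW'‖ ≤ D := le_max_of_le_right (le_max_left _ _)
  have hηD : |η - η'| ≤ D := le_max_of_le_right (le_max_right _ _)
  have hD0 : 0 ≤ D := le_trans (norm_nonneg _) hxxD
  have hsD : ∀ k, |s k - s' k| ≤ D := by
    intro k
    have := norm_le_pi_norm (s - s') k
    simpa [Real.norm_eq_abs] using this.trans hssD
  have htAkD : ∀ i j k, |tA i j k - tA' i j k| ≤ D := by
    intro i j k
    have h1 := norm_le_pi_norm (tA - tA') i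
    have h2 := norm_le_pi_norm ((tA - tA') i) j
    have h3 := norm_le_pi_norm ((tA - tA') i j) k
    have : |tA i j k - tA' i j k| ≤ ‖tA - tA'‖ := by
      simpa [Real.norm_eq_abs] using h3.trans (h2.trans h1)
    exact this.trans htAD
  have htWkD : ∀ i j k, |tW i j k - tW' i j k| ≤ D := by
    intro i j k
    have h1 := norm_le_pi_norm (tW - tW') i
    have h2 := norm_le_pi_norm ((tW - tW') i) j
    have h3 := norm_le_pi_norm ((tW - tW') i j) k
    have : |tW i j k - tW' i j k| ≤ ‖tW - tW'‖ := by
      simpa [Real.norm_eq_abs] using h3.trans (h2.trans h1)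
    exact this.trans htWD
  have hsk1 : ∀ k, |s k| ≤ 1 := fun k =>
    abs_le.mpr ⟨by linarith [(hs k).1], (hs k).2⟩
  have hsk1' : ∀ k, |s' k| ≤ 1 := fun k =>
    abs_le.mpr ⟨by linarith [(hs' k).1], (hs' k).2⟩
  -- generic sum bound
  have hsum : ∀ (w : Fin N → ℝ) (M : ℝ), 0 ≤ M → (∀ k, |w k| ≤ M) →
      |∑ k, lam (B k) * w k| ≤ N * (Clam * M) := by
    intro w M hM hw
    calc |∑ k, lam (B k) * w k| ≤ ∑ k, |lam (B k) * w k| :=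
          Finset.abs_sum_le_sum_abs _ _
      _ ≤ ∑ _k : Fin N, Clam * M := by
          refine Finset.sum_le_sum fun k _ => ?_
          rw [abs_mul]
          exact mul_le_mul (hlam _) (hw k) (abs_nonneg _) hClam.le
      _ = N * (Clam * M) := by simp [Finset.card_univ, mul_comm]
  set e : ℝ := -(f x z η - ∑ k, lam (B k) * s k - lam c) with he_def
  set e' : ℝ := -(f x' z' η' - ∑ k, lam (B k) * s' k - lam c) with he'_def
  have heE : |e| ≤ E := by
    have h1 := hfbdd x z η
    have h2 := hsum s 1 zero_le_one hsk1
    have h3 := hlam c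
    rw [he_def, abs_neg]
    calc |f x z η - ∑ k, lam (B k) * s k - lam c|
        ≤ |f x z η - ∑ k, lam (B k) * s k| + |lam c| := abs_sub _ _
      _ ≤ (|f x z η| + |∑ k, lam (B k) * s k|) + |lam c| := by
          exact add_le_add_left (abs_sub _ _) _
      _ ≤ E := by rw [hE_def]; linarith
  have he'E : |e'| ≤ E := by
    have h1 := hfbdd x' z' η'
    have h2 := hsum s' 1 zero_le_one hsk1'
    have h3 := hlam c
    rw [he'_def, abs_neg]
    calc |f x' z' η' - ∑ k, lam (B k) * s' k - lam c|
        ≤ |f x' z' η' - ∑ k, lam (B k) * s' k| + |lam c| := abs_sub _ _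
      _ ≤ (|f x' z' η'| + |∑ k, lam (B k) * s' k|) + |lam c| := by
          exact add_le_add_left (abs_sub _ _) _
      _ ≤ E := by rw [hE_def]; linarith
  have hediff : |e - e'| ≤ Le * D := by
    have hf := hflip x z η x' z' η'
    have hmaxD : max (max ‖x - x'‖ ‖z - z'‖) |η - η'| ≤ D :=
      max_le (max_le hxxD hzzD) hηD
    have hsumdiff : |∑ k, lam (B k) * s k - ∑ k, lam (B k) * s' k| ≤ N * (Clam * D) := by
      have : ∑ k, lam (B k) * s k - ∑ k, lam (B k) * s' k
          = ∑ k, lam (B k) * (s k - s' k) := by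
        rw [← Finset.sum_sub_distrib]
        congr 1; ext k; ring
      rw [this]
      exact hsum _ D hD0 hsD
    have hee : e - e' = -(f x z η - f x' z' η')
        + (∑ k, lam (B k) * s k - ∑ k, lam (B k) * s' k) := by
      rw [he_def, he'_def]; ring
    calc |e - e'| ≤ |(-(f x z η - f x' z' η'))|
          + |∑ k, lam (B k) * s k - ∑ k, lam (B k) * s' k| := by
          rw [hee]; exact abs_add_le _ _
      _ ≤ Lf * D + N * (Clam * D) := by
          rw [abs_neg]
          refine add_le_add (hf.trans ?_) hsumdiff
          exact mul_le_mul_of_nonneg_left hmaxD hLf.le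
      _ = Le * D := by rw [hLe_def]; ring
  -- generic product bound
  have key : ∀ (v v' M Kv : ℝ), 0 ≤ M → 0 ≤ Kv → |v - v'| ≤ M → |v'| ≤ Kv →
      |e * v - e' * v'| ≤ E * M + (Le * D) * Kv := by
    intro v v' M Kv hM hKv h1 h2
    have hsplit : e * v - e' * v' = e * (v - v') + (e - e') * v' := by ring
    calc |e * v - e' * v'| = |e * (v - v') + (e - e') * v'| := by rw [hsplit]
      _ ≤ |e * (v - v')| + |(e - e') * v'| := abs_add_le _ _
      _ = |e| * |v - v'| + |e - e'| * |v'| := by rw [abs_mul, abs_mul]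
      _ ≤ E * M + (Le * D) * Kv :=
          add_le_add (mul_le_mul heE h1 (abs_nonneg _) hE0)
            (mul_le_mul hediff h2 (abs_nonneg _) (by positivity))
  have hC0aux : 0 ≤ (N:ℝ) * Clam := by positivity
  have hXA : 0 ≤ (N:ℝ) * Clam * (E + Le * Ka) :=
    mul_nonneg hC0aux (add_nonneg hE0 (mul_nonneg hLe0 hKa0))
  have hXW : 0 ≤ (N:ℝ) * Clam * (E + Le * Kw) :=
    mul_nonneg hC0aux (add_nonneg hE0 (mul_nonneg hLe0 hKw0))
  have hXC : 0 ≤ Clam' * (E + Le) := mul_nonneg hClam'.le (add_nonneg hE0 hLe0)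
  refine max_le (max_le ?_ ?_) (max_le ?_ ?_)
  · -- block A
    rw [pi_norm_le_iff_of_nonneg (by positivity)]
    intro i
    rw [pi_norm_le_iff_of_nonneg (by positivity)]
    intro j
    have hv : |(∑ k, lam (B k) * tA i j k) - ∑ k, lam (B k) * tA' i j k|
        ≤ N * (Clam * D) := by
      have : (∑ k, lam (B k) * tA i j k) - ∑ k, lam (B k) * tA' i j k
          = ∑ k, lam (B k) * (tA i j k - tA' i j k) := by
        rw [← Finset.sum_sub_distrib]; congr 1; ext k; ring
      rw [this]
      exact hsum _ D hD0 (htAkD i j)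
    have hv' : |∑ k, lam (B k) * tA' i j k| ≤ N * (Clam * Ka) :=
      hsum _ Ka hKa0 (fun k => htA' i j k)
    have := key _ _ _ _ (by positivity) (by positivity) hv hv'
    simp only [Pi.sub_apply, Real.norm_eq_abs]
    calc |e * (∑ k, lam (B k) * tA i j k) - e' * ∑ k, lam (B k) * tA' i j k|
        ≤ E * (N * (Clam * D)) + (Le * D) * (N * (Clam * Ka)) := this
      _ = ((N:ℝ) * Clam * (E + Le * Ka)) * D := by ring
      _ ≤ _ := mul_le_mul_of_nonneg_right (by linarith) hD0
  · -- block W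
    rw [pi_norm_le_iff_of_nonneg (by positivity)]
    intro i
    rw [pi_norm_le_iff_of_nonneg (by positivity)]
    intro j
    have hv : |(∑ k, lam (B k) * tW i j k) - ∑ k, lam (B k) * tW' i j k|
        ≤ N * (Clam * D) := by
      have : (∑ k, lam (B k) * tW i j k) - ∑ k, lam (B k) * tW' i j k
          = ∑ k, lam (B k) * (tW i j k - tW' i j k) := by
        rw [← Finset.sum_sub_distrib]; congr 1; ext k; ring
      rw [this]
      exact hsum _ D hD0 (htWkD i j)
    have hv' : |∑ k, lam (B k) * tW' i j k| ≤ N * (Clam * Kw) :=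
      hsum _ Kw hKw0 (fun k => htW' i j k)
    have := key _ _ _ _ (by positivity) (by positivity) hv hv'
    simp only [Pi.sub_apply, Real.norm_eq_abs]
    calc |e * (∑ k, lam (B k) * tW i j k) - e' * ∑ k, lam (B k) * tW' i j k|
        ≤ E * (N * (Clam * D)) + (Le * D) * (N * (Clam * Kw)) := this
      _ = ((N:ℝ) * Clam * (E + Le * Kw)) * D := by ring
      _ ≤ _ := mul_le_mul_of_nonneg_right (by linarith) hD0
  · -- block B
    rw [pi_norm_le_iff_of_nonneg (by positivity)]
    intro k
    simp only [Pi.sub_apply, Real.norm_eq_abs]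
    have hsplit : e * (deriv lam (B k) * s k) - e' * (deriv lam (B k) * s' k)
        = deriv lam (B k) * (e * s k - e' * s' k) := by ring
    have hinner : |e * s k - e' * s' k| ≤ E * D + (Le * D) * 1 :=
      key _ _ _ _ hD0 zero_le_one (hsD k) (hsk1' k)
    calc |e * (deriv lam (B k) * s k) - e' * (deriv lam (B k) * s' k)|
        = |deriv lam (B k)| * |e * s k - e' * s' k| := by rw [hsplit, abs_mul]
      _ ≤ Clam' * (E * D + (Le * D) * 1) :=
          mul_le_mul (hlam' _) hinner (abs_nonneg _) hClam'.le
      _ = (Clam' * (E + Le)) * D := by ring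
      _ ≤ _ := mul_le_mul_of_nonneg_right (by linarith) hD0
  · -- block c
    have hsplit : e * deriv lam c - e' * deriv lam c = (e - e') * deriv lam c := by ring
    calc |e * deriv lam c - e' * deriv lam c|
        = |e - e'| * |deriv lam c| := by rw [hsplit, abs_mul]
      _ ≤ (Le * D) * Clam' :=
          mul_le_mul hediff (hlam' _) (abs_nonneg _) (by positivity)
      _ = (Clam' * Le) * D := by ring
      _ ≤ _ := mul_le_mul_of_nonneg_right
          (by nlinarith [mul_nonneg hClam'.le hE0]) hD0
end

section
/- Let (α_t)_{t≥0} be a nonincreasing sequence of positive reals with ∑_{t=0}^∞ α_t² < ∞, let C₁, C₂, C₃ ≥ 0, and let (e_t)_{t≥0} and (g_t)_{t≥0} be sequences of nonnegative reals such that for all integers 0 ≤ i < T: e_T ≤ e_i − ∑_{t=i}^{T−1} α_t g_t + C₁ α_i + C₂ ∑_{t=i}^{T−1} α_t² + C₃ (∑_{t=i}^{T−1} α_t²)^{1/2}. Then the sequence (e_t) converges to a finite limit as t → ∞, and ∑_{t=0}^∞ α_t g_t < ∞. -/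
open Filter Finset

theorem expected_loss_convergence
    (α : ℕ → ℝ) (hαpos : ∀ t, 0 < α t) (hαmono : Antitone α)
    (hα2 : Summable fun t => (α t) ^ 2)
    (C₁ C₂ C₃ : ℝ) (hC₁ : 0 ≤ C₁) (hC₂ : 0 ≤ C₂) (hC₃ : 0 ≤ C₃)
    (e g : ℕ → ℝ) (he : ∀ t, 0 ≤ e t) (hg : ∀ t, 0 ≤ g t)
    (hkey : ∀ i T : ℕ, i < T →
      e T ≤ e i - ∑ t ∈ Finset.Ico i T, α t * g t
        + C₁ * α i + C₂ * ∑ t ∈ Finset.Ico i T, (α t) ^ 2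
        + C₃ * Real.sqrt (∑ t ∈ Finset.Ico i T, (α t) ^ 2)) :
    (∃ l : ℝ, Tendsto e atTop (nhds l)) ∧ Summable (fun t => α t * g t) := by
  set R : ℕ → ℝ := fun i => ∑' k, α (k + i) ^ 2 with hRdef
  have hRnn : ∀ i, 0 ≤ R i := fun i => tsum_nonneg fun k => sq_nonneg _
  have hsumshift : ∀ i, Summable fun k => α (k + i) ^ 2 := fun i =>
    (summable_nat_add_iff i).2 hα2
  have hIco_le : ∀ i T, ∑ t ∈ Finset.Ico i T, (α t) ^ 2 ≤ R i := by
    intro i T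
    rcases le_or_gt T i with h | h
    · simpa [Finset.Ico_eq_empty_of_le h] using hRnn i
    · rw [Finset.sum_Ico_eq_sum_range]
      have : ∑ k ∈ Finset.range (T - i), α (i + k) ^ 2
          = ∑ k ∈ Finset.range (T - i), α (k + i) ^ 2 := by
        simp [add_comm]
      rw [this]
      exact Summable.sum_le_tsum _ (fun k _ => sq_nonneg _) (hsumshift i)
  -- ε i
  set ε : ℕ → ℝ := fun i => C₁ * α i + C₂ * R i + C₃ * Real.sqrt (R i) with hεdef
  have hεnn : ∀ i, 0 ≤ ε i := fun i => by
    have := (hαpos i).le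
    have := hRnn i
    have := Real.sqrt_nonneg (R i)
    positivity
  have hα0 : Tendsto α atTop (nhds 0) := by
    have h1 : Tendsto (fun t => (α t) ^ 2) atTop (nhds 0) := hα2.tendsto_atTop_zero
    have h2 : Tendsto (fun t => Real.sqrt ((α t) ^ 2)) atTop (nhds (Real.sqrt 0)) :=
      (Real.continuous_sqrt.tendsto 0).comp h1
    rw [Real.sqrt_zero] at h2
    convert h2 using 1
    funext t
    rw [Real.sqrt_sq (hαpos t).le]
  have hR0 : Tendsto R atTop (nhds 0) := tendsto_sum_nat_add (fun t => (α t) ^ 2)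
  have hsqrtR0 : Tendsto (fun i => Real.sqrt (R i)) atTop (nhds 0) := by
    have := (Real.continuous_sqrt.tendsto 0).comp hR0
    simpa [Function.comp_def] using this
  have hε0 : Tendsto ε atTop (nhds 0) := by
    have h := ((hα0.const_mul C₁).add (hR0.const_mul C₂)).add (hsqrtR0.const_mul C₃)
    simpa using h
  -- key inequality with ε
  have hkey' : ∀ i T : ℕ, i < T →
      e T ≤ e i - ∑ t ∈ Finset.Ico i T, α t * g t + ε i := by
    intro i T hiT
    have h1 := hkey i T hiT
    have h2 : C₂ * ∑ t ∈ Finset.Ico i T, (α t) ^ 2 ≤ C₂ * R i :=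
      mul_le_mul_of_nonneg_left (hIco_le i T) hC₂
    have h3 : C₃ * Real.sqrt (∑ t ∈ Finset.Ico i T, (α t) ^ 2) ≤ C₃ * Real.sqrt (R i) :=
      mul_le_mul_of_nonneg_left (Real.sqrt_le_sqrt (hIco_le i T)) hC₃
    simp only [hεdef]
    linarith
  have hsum_nn : ∀ i T : ℕ, 0 ≤ ∑ t ∈ Finset.Ico i T, α t * g t := fun i T =>
    Finset.sum_nonneg fun t _ => mul_nonneg (hαpos t).le (hg t)
  have hupper : ∀ i T : ℕ, i < T → e T ≤ e i + ε i := by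
    intro i T hiT
    have := hkey' i T hiT
    have := hsum_nn i T
    linarith
  -- summability
  have hsummable : Summable (fun t => α t * g t) := by
    apply summable_of_sum_range_le (c := e 0 + ε 0)
      (fun t => mul_nonneg (hαpos t).le (hg t))
    intro T
    rcases Nat.eq_zero_or_pos T with rfl | hT
    · simp
      linarith [he 0, hεnn 0]
    · have h := hkey' 0 T hT
      have h2 := he T
      rw [Finset.range_eq_Ico]
      linarith
  refine ⟨?_, hsummable⟩
  -- boundedness of e
  have hub : ∀ t, e t ≤ e 0 + ε 0 := by
    intro t
    rcases Nat.eq_zero_or_pos t with rfl | ht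
    · linarith [hεnn 0]
    · exact hupper 0 t ht
  have hbdd_le : IsBoundedUnder (· ≤ ·) atTop e :=
    isBoundedUnder_of ⟨e 0 + ε 0, hub⟩
  have hbdd_ge : IsBoundedUnder (· ≥ ·) atTop e :=
    isBoundedUnder_of ⟨0, he⟩
  set L := liminf e atTop with hLdef
  refine ⟨L, ?_⟩
  clear_value R ε L
  rw [Metric.tendsto_atTop]
  intro δ hδ
  -- lower bound eventually
  have hlow : ∀ᶠ n in atTop, L - δ / 2 < e n := by
    exact eventually_lt_of_lt_liminf (by linarith) hbdd_ge
  -- upper bound eventually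
  have hfreq : ∃ᶠ i in atTop, e i < L + δ / 2 := by
    exact frequently_lt_of_liminf_lt hbdd_le.isCoboundedUnder_ge (by linarith)
  have hεsmall : ∀ᶠ i in atTop, ε i < δ / 2 := by
    have := hε0
    rw [Metric.tendsto_atTop] at this
    obtain ⟨N, hN⟩ := this (δ / 2) (by linarith)
    exact eventually_atTop.2 ⟨N, fun n hn => by
      have := hN n hn
      rw [Real.dist_eq, sub_zero] at this
      exact lt_of_le_of_lt (le_abs_self _) this⟩
  obtain ⟨i, hi1, hi2⟩ := (hfreq.and_eventually hεsmall).exists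
  have hhigh : ∀ᶠ n in atTop, e n < L + δ := by
    refine eventually_atTop.2 ⟨i + 1, fun n hn => ?_⟩
    have h5 := hupper i n (by omega)
    linarith [h5, hi1, hi2]
  obtain ⟨N, hN⟩ := eventually_atTop.1 (hlow.and hhigh)
  refine ⟨N, fun n hn => ?_⟩
  have := hN n hn
  rw [Real.dist_eq, abs_sub_lt_iff]
  constructor <;> linarith [this.1, this.2]
end

section
/- Let (α_t)_{t≥0} be a sequence of positive reals with ∑_{t=0}^∞ α_t = ∞ and α_t → 0, let C > 0, and let (b_t)_{t≥0} be a sequence of nonnegative reals satisfying ∑_{t=0}^∞ α_t b_t² < ∞ and |b_{t+1} − b_t| ≤ C α_t for all t ≥ 0. Then lim_{t→∞} b_t = 0. -/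
open Filter Finset

theorem gradient_norm_tendsto_zero
    (α : ℕ → ℝ) (hα : ∀ t, 0 < α t)
    (hdiv : Tendsto (fun T => ∑ t ∈ Finset.range T, α t) atTop atTop)
    (hα0 : Tendsto α atTop (nhds 0))
    (C : ℝ) (hC : 0 < C)
    (b : ℕ → ℝ) (hb : ∀ t, 0 ≤ b t)
    (hsum : Summable fun t => α t * (b t) ^ 2)
    (hinc : ∀ t, |b (t + 1) - b t| ≤ C * α t) :
    Tendsto b atTop (nhds 0) := by
  rw [Metric.tendsto_atTop]
  intro ε hε
  set δ := ε / 2 with hδdef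
  have hδ : 0 < δ := by positivity
  have hcδ : 0 < δ ^ 3 / (2 * C) := by positivity
  -- telescoping increment bound
  have hdiff : ∀ m n : ℕ, m ≤ n → b n - b m ≤ ∑ j ∈ Finset.Ico m n, C * α j := by
    intro m n hmn
    induction n, hmn using Nat.le_induction with
    | base => simp
    | succ n hmn ih =>
      rw [Finset.sum_Ico_succ_top hmn]
      have h2 := (abs_le.mp (hinc n)).2
      linarith
  -- N₁ : steps are eventually small
  have h1 : ∀ᶠ t in atTop, C * α t < δ / 2 := by
    have h0 : Tendsto (fun t => C * α t) atTop (nhds (C * 0)) := hα0.const_mul C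
    rw [mul_zero] at h0
    exact h0.eventually_lt_const (by positivity)
  obtain ⟨N₁, hN₁⟩ := eventually_atTop.mp h1
  -- vanishing tail sums
  obtain ⟨s₀, hs₀⟩ := summable_iff_vanishing.mp hsum (Set.Iio (δ ^ 3 / (2 * C)))
    (Iio_mem_nhds hcδ)
  obtain ⟨N₂, hN₂⟩ := s₀.exists_nat_subset_range
  set N := max N₁ N₂ with hNdef
  have hIco : ∀ a m : ℕ, N₂ ≤ a →
      ∑ t ∈ Finset.Ico a m, α t * b t ^ 2 < δ ^ 3 / (2 * C) := by
    intro a m ha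
    have hdisj : Disjoint (Finset.Ico a m) s₀ := by
      rw [Finset.disjoint_left]
      intro x hx hxs
      have hx1 := (Finset.mem_Ico.mp hx).1
      have hx2 := Finset.mem_range.mp (hN₂ hxs)
      omega
    exact hs₀ _ hdisj
  -- step 1: b drops below δ at some t₀ ≥ N
  obtain ⟨t₀, ht₀N, ht₀⟩ : ∃ t₀, N ≤ t₀ ∧ b t₀ < δ := by
    by_contra h
    push_neg at h
    have hbound : ∀ M, N ≤ M →
        ∑ t ∈ Finset.range M, α t ≤
          ∑ t ∈ Finset.range N, α t + δ ^ 3 / (2 * C) / δ ^ 2 := by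
      intro M hM
      rw [← Finset.sum_range_add_sum_Ico _ hM]
      have h2 : ∑ t ∈ Finset.Ico N M, α t ≤
          (∑ t ∈ Finset.Ico N M, α t * b t ^ 2) / δ ^ 2 := by
        rw [Finset.sum_div]
        apply Finset.sum_le_sum
        intro i hi
        have hiN := (Finset.mem_Ico.mp hi).1
        have hbi := h i hiN
        have hαi := hα i
        rw [le_div_iff₀ (by positivity)]
        nlinarith [mul_le_mul_of_nonneg_left (pow_le_pow_left₀ hδ.le hbi 2) (hα i).le]
      have h3 : (∑ t ∈ Finset.Ico N M, α t * b t ^ 2) / δ ^ 2 ≤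
          δ ^ 3 / (2 * C) / δ ^ 2 := by
        gcongr
        exact (hIco N M (le_max_right _ _)).le
      linarith
    obtain ⟨M, hM1, hM2⟩ :=
      ((hdiv.eventually_gt_atTop
        (∑ t ∈ Finset.range N, α t + δ ^ 3 / (2 * C) / δ ^ 2)).and
        (eventually_ge_atTop N)).exists
    exact absurd (hbound M hM2) (not_le.mpr hM1)
  refine ⟨t₀, fun n hn => ?_⟩
  rw [Real.dist_eq, sub_zero, abs_of_nonneg (hb n)]
  by_contra hcon
  push_neg at hcon
  have hbs : 2 * δ ≤ b n := by rw [hδdef]; linarith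
  have ht₀n : t₀ < n := by
    rcases lt_or_eq_of_le hn with h | h
    · exact h
    · exfalso; rw [h] at ht₀; linarith
  set T := (Finset.range n).filter (fun u => b u < δ) with hT
  have hT0 : t₀ ∈ T := by
    simp only [hT, Finset.mem_filter, Finset.mem_range]
    exact ⟨ht₀n, ht₀⟩
  set u := T.max' ⟨t₀, hT0⟩ with hu
  have huT : u ∈ T := Finset.max'_mem _ _
  have hun : u < n := Finset.mem_range.mp (Finset.mem_filter.mp huT).1
  have hbu : b u < δ := (Finset.mem_filter.mp huT).2
  have hut₀ : t₀ ≤ u := Finset.le_max' _ _ hT0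
  have huN₁ : N₁ ≤ u := le_trans (le_trans (le_max_left _ _) ht₀N) hut₀
  have hstep : C * α u < δ / 2 := hN₁ u huN₁
  have hbu1 : b (u + 1) < δ + δ / 2 := by
    have := (abs_le.mp (hinc u)).2; linarith
  have hu1n : u + 1 < n := by
    rcases Nat.lt_or_ge (u + 1) n with h | h
    · exact h
    · exfalso
      have heq : u + 1 = n := by omega
      rw [heq] at hbu1; linarith
  have hmid : ∀ j ∈ Finset.Ico (u + 1) n, δ ≤ b j := by
    intro j hj
    obtain ⟨hj1, hj2⟩ := Finset.mem_Ico.mp hj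
    by_contra hlt
    push_neg at hlt
    have hjT : j ∈ T := Finset.mem_filter.mpr ⟨Finset.mem_range.mpr hj2, hlt⟩
    have := Finset.le_max' T j hjT
    omega
  have hsum1 : δ / 2 ≤ ∑ j ∈ Finset.Ico (u + 1) n, C * α j := by
    have := hdiff (u + 1) n (le_of_lt hu1n)
    linarith
  have hsum2 : δ ^ 3 / (2 * C) ≤ ∑ j ∈ Finset.Ico (u + 1) n, α j * b j ^ 2 := by
    have h3 : ∀ j ∈ Finset.Ico (u + 1) n,
        δ ^ 2 / C * (C * α j) ≤ α j * b j ^ 2 := by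
      intro j hj
      have hbj := hmid j hj
      have hαj := hα j
      have heq : δ ^ 2 / C * (C * α j) = δ ^ 2 * α j := by
        field_simp
      rw [heq]
      nlinarith [mul_le_mul_of_nonneg_left (pow_le_pow_left₀ hδ.le hbj 2) hαj.le]
    calc δ ^ 3 / (2 * C) = δ ^ 2 / C * (δ / 2) := by field_simp
      _ ≤ δ ^ 2 / C * ∑ j ∈ Finset.Ico (u + 1) n, C * α j :=
          mul_le_mul_of_nonneg_left hsum1 (by positivity)
      _ = ∑ j ∈ Finset.Ico (u + 1) n, δ ^ 2 / C * (C * α j) := Finset.mul_sum ..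
      _ ≤ _ := Finset.sum_le_sum h3
  have hN₂u : N₂ ≤ u + 1 := by
    have : N₂ ≤ t₀ := le_trans (le_max_right _ _) ht₀N
    omega
  exact absurd (hIco (u + 1) n hN₂u) (not_lt.mpr hsum2)
end
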